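/- arXiv:math-ph/0507053 — 2 statements merged into one kernel-verified Lean document; each statement's English description precedes it below -/
import Mathlib

section
/- Hyperbolic Cauchy–Goursat theorem (rectangle form): let U ⊆ ℝ² be an open set containing the closed rectangle [a,b] × [c,d], and let u, v : ℝ² → ℝ be continuously differentiable on U and satisfy the hyperbolic Cauchy–Riemann equations ∂u/∂x = ∂v/∂y and ∂u/∂y = ∂v/∂x on U. Then the contour integral of f(z) dz around the positively oriented boundary of the rectangle vanishes; explicitly, both (∫_a^b u(x,c) dx + ∫_c^d v(b,y) dy − ∫_a^b u(x,d) dx − ∫_c^d v(a,y) dy) = 0 and (∫_a^b v(x,c) dx + ∫_c^d u(b,y) dy − ∫_a^b v(x,d) dx − ∫_c^d u(a,y) dy) = 0. -/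
/-!
Green's theorem on a rectangle, in divergence form, says that the boundary integral
`∮ (f dy - g dx)` equals `∬ (∂f/∂x + ∂g/∂y)`. For the real part `∮ (u dx + v dy)` take
`(f, g) = (v, -u)`, for the imaginary part `∮ (v dx + u dy)` take `(f, g) = (u, -v)`; the
hyperbolic Cauchy–Riemann equations say exactly that these two fields are divergence free.
-/

open MeasureTheory intervalIntegral

/-- Partial derivative with respect to the first variable: `∂u/∂x (p) = (Du)(p)(1,0)`. -/
noncomputable def pdx (u : ℝ × ℝ → ℝ) (p : ℝ × ℝ) : ℝ := fderiv ℝ u p (1, 0)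

/-- Partial derivative with respect to the second variable: `∂u/∂y (p) = (Du)(p)(0,1)`. -/
noncomputable def pdy (u : ℝ × ℝ → ℝ) (p : ℝ × ℝ) : ℝ := fderiv ℝ u p (0, 1)

open Set Interval in
theorem integral_boundary_rect_eq_zero_of_pdx_add_pdy_eq_zero {f g : ℝ × ℝ → ℝ} {a b c d : ℝ}
    (hf : ∀ p ∈ [[a, b]] ×ˢ [[c, d]], DifferentiableAt ℝ f p)
    (hg : ∀ p ∈ [[a, b]] ×ˢ [[c, d]], DifferentiableAt ℝ g p)
    (hdiv : ∀ p ∈ [[a, b]] ×ˢ [[c, d]], pdx f p + pdy g p = 0) :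
    (∫ x in a..b, g (x, d)) - (∫ x in a..b, g (x, c)) + (∫ y in c..d, f (b, y))
      - (∫ y in c..d, f (a, y)) = 0 := by
  have hinterior : Ioo (min a b) (max a b) ×ˢ Ioo (min c d) (max c d) ⊆ [[a, b]] ×ˢ [[c, d]] :=
    prod_mono Ioo_subset_Icc_self Ioo_subset_Icc_self
  have hdiv_zero : EqOn (fun p => fderiv ℝ f p (1, 0) + fderiv ℝ g p (0, 1)) 0
      ([[a, b]] ×ˢ [[c, d]]) := hdiv
  rw [← integral2_divergence_prod_of_hasFDerivAt f g (fderiv ℝ f) (fderiv ℝ g) a c b d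
    (fun p hp => (hf p hp).continuousAt.continuousWithinAt)
    (fun p hp => (hg p hp).continuousAt.continuousWithinAt)
    (fun p hp => (hf p (hinterior hp)).hasFDerivAt)
    (fun p hp => (hg p (hinterior hp)).hasFDerivAt)
    ((integrableOn_congr_fun hdiv_zero (measurableSet_uIcc.prod measurableSet_uIcc)).mpr
      integrableOn_zero)]
  refine (integral_congr fun x hx => ?_).trans integral_zero
  exact (integral_congr fun y hy => hdiv_zero ⟨hx, hy⟩).trans integral_zero

theorem pdy_neg (w : ℝ × ℝ → ℝ) (p : ℝ × ℝ) : pdy (fun q => -w q) p = -pdy w p := by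
  simp [pdy]

/-- Hyperbolic Cauchy–Goursat theorem (rectangle form): if `u, v` are continuously
differentiable on an open set `U` containing the closed rectangle `[a,b] × [c,d]` and
satisfy the hyperbolic Cauchy–Riemann equations `∂u/∂x = ∂v/∂y`, `∂u/∂y = ∂v/∂x` on `U`,
then the contour integral `∮ f(z) dz = ∮ (u dx + v dy) + i ∮ (v dx + u dy)` around the
positively oriented boundary of the rectangle vanishes (both its real and imaginary
parts are zero). -/
theorem hyperbolic_cauchy_goursat_rectangle (U : Set (ℝ × ℝ)) (hU : IsOpen U)
    (a b c d : ℝ) (hab : a ≤ b) (hcd : c ≤ d)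
    (hrect : Set.Icc a b ×ˢ Set.Icc c d ⊆ U)
    (u v : ℝ × ℝ → ℝ) (hu : ContDiffOn ℝ 1 u U) (hv : ContDiffOn ℝ 1 v U)
    (hCR₁ : ∀ p ∈ U, pdx u p = pdy v p) (hCR₂ : ∀ p ∈ U, pdy u p = pdx v p) :
    ((∫ x in a..b, u (x, c)) + (∫ y in c..d, v (b, y))
      - (∫ x in a..b, u (x, d)) - (∫ y in c..d, v (a, y)) = 0) ∧
    ((∫ x in a..b, v (x, c)) + (∫ y in c..d, u (b, y))
      - (∫ x in a..b, v (x, d)) - (∫ y in c..d, u (a, y)) = 0) := by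
  rw [← Set.uIcc_of_le hab, ← Set.uIcc_of_le hcd] at hrect
  have hdiff {w : ℝ × ℝ → ℝ} (hw : ContDiffOn ℝ 1 w U) :
      ∀ p ∈ Set.uIcc a b ×ˢ Set.uIcc c d, DifferentiableAt ℝ w p := fun p hp =>
    (hw.differentiableOn one_ne_zero).differentiableAt (hU.mem_nhds (hrect hp))
  have hreal := integral_boundary_rect_eq_zero_of_pdx_add_pdy_eq_zero (hdiff hv) (hdiff hu.neg)
    fun p hp => by rw [pdy_neg, hCR₂ p (hrect hp), add_neg_cancel]
  have himag := integral_boundary_rect_eq_zero_of_pdx_add_pdy_eq_zero (hdiff hu) (hdiff hv.neg)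
    fun p hp => by rw [pdy_neg, hCR₁ p (hrect hp), add_neg_cancel]
  simp only [intervalIntegral.integral_neg] at hreal himag
  constructor <;> linarith
end

section
/- Stereographic coordinates do not define a hyperbolic structure on the sphere: the transition function F(Z) = α(X,Y) + i β(X,Y) with α(X,Y) = X/(X² + Y²) and β(X,Y) = −Y/(X² + Y²) is not hyperbolic analytic; precisely, for every (X, Y) ∈ ℝ² with X ≠ 0 and Y ≠ 0 one has ∂α/∂Y (X,Y) = −2XY/(X² + Y²)² and ∂β/∂X (X,Y) = 2XY/(X² + Y²)², so ∂α/∂Y (X,Y) ≠ ∂β/∂X (X,Y), and the second hyperbolic Cauchy–Riemann equation fails at (X, Y). -/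
theorem pdx_eq_deriv {u : ℝ × ℝ → ℝ} {p : ℝ × ℝ} (hu : DifferentiableAt ℝ u p) :
    pdx u p = deriv (fun x => u (x, p.2)) p.1 :=
  (hu.hasFDerivAt.comp_hasDerivAt p.1
    ((hasDerivAt_id p.1).prodMk (hasDerivAt_const p.1 p.2))).deriv.symm

theorem pdy_eq_deriv {u : ℝ × ℝ → ℝ} {p : ℝ × ℝ} (hu : DifferentiableAt ℝ u p) :
    pdy u p = deriv (fun y => u (p.1, y)) p.2 :=
  (hu.hasFDerivAt.comp_hasDerivAt p.2
    ((hasDerivAt_const p.2 p.1).prodMk (hasDerivAt_id p.2))).deriv.symm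

theorem hasDerivAt_const_div_sq_add (a b t : ℝ) (h : t ^ 2 + b ≠ 0) :
    HasDerivAt (fun s => a / (s ^ 2 + b)) (-2 * a * t / (t ^ 2 + b) ^ 2) t :=
  ((hasDerivAt_const t a).div ((hasDerivAt_pow 2 t).add_const b) h).congr_deriv (by
    norm_num; ring)

theorem pdy_div_sq_add_sq (X Y : ℝ) (h : X ^ 2 + Y ^ 2 ≠ 0) :
    pdy (fun p : ℝ × ℝ => p.1 / (p.1 ^ 2 + p.2 ^ 2)) (X, Y)
      = -2 * X * Y / (X ^ 2 + Y ^ 2) ^ 2 := by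
  rw [pdy_eq_deriv (by fun_prop (disch := exact h))]
  simp only [add_comm (X ^ 2)] at h ⊢
  exact (hasDerivAt_const_div_sq_add X (X ^ 2) Y h).deriv

theorem pdx_neg_div_sq_add_sq (X Y : ℝ) (h : X ^ 2 + Y ^ 2 ≠ 0) :
    pdx (fun p : ℝ × ℝ => -p.2 / (p.1 ^ 2 + p.2 ^ 2)) (X, Y)
      = 2 * X * Y / (X ^ 2 + Y ^ 2) ^ 2 := by
  rw [pdx_eq_deriv (by fun_prop (disch := exact h))]
  convert (hasDerivAt_const_div_sq_add (-Y) (Y ^ 2) X h).deriv using 1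
  ring

/-- The south-pole stereographic transition function
`F(Z) = α(X,Y) + i β(X,Y)`, `α = X/(X²+Y²)`, `β = −Y/(X²+Y²)`, is not hyperbolic
analytic: for every `(X, Y)` with `X ≠ 0` and `Y ≠ 0` one has
`∂α/∂Y = −2XY/(X²+Y²)²` and `∂β/∂X = 2XY/(X²+Y²)²`, so `∂α/∂Y ≠ ∂β/∂X` and the second
hyperbolic Cauchy–Riemann equation fails there; hence stereographic coordinates do not
define a hyperbolic structure on the sphere. -/
theorem stereographic_transition_not_hyperbolic_analytic (X Y : ℝ) (hX : X ≠ 0) (hY : Y ≠ 0) :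
    pdy (fun p : ℝ × ℝ => p.1 / (p.1 ^ 2 + p.2 ^ 2)) (X, Y)
        = -2 * X * Y / (X ^ 2 + Y ^ 2) ^ 2 ∧
    pdx (fun p : ℝ × ℝ => -p.2 / (p.1 ^ 2 + p.2 ^ 2)) (X, Y)
        = 2 * X * Y / (X ^ 2 + Y ^ 2) ^ 2 ∧
    pdy (fun p : ℝ × ℝ => p.1 / (p.1 ^ 2 + p.2 ^ 2)) (X, Y)
        ≠ pdx (fun p : ℝ × ℝ => -p.2 / (p.1 ^ 2 + p.2 ^ 2)) (X, Y) := by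
  have hs : X ^ 2 + Y ^ 2 ≠ 0 := by positivity
  have hαy := pdy_div_sq_add_sq X Y hs
  have hβx := pdx_neg_div_sq_add_sq X Y hs
  refine ⟨hαy, hβx, ?_⟩
  rw [hαy, hβx, neg_mul, neg_mul, neg_div, neg_ne_self]
  positivity
end
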